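/- Suppose {p_k}_{k=1}^∞ is a sequence of n-dimensional vector polynomials orthonormal in L_2(R,σ) for a positive matrix measure σ with finite moments, and {q_j}_{j=1}^{j_0} are null vector polynomials such that every vector polynomial is a finite linear combination of {p_k} ∪ {z^l q_j : l ≥ 0, j ≤ j_0}. Then every vector polynomial r in the zero equivalence class of L_2(R,σ) can be written as r(z) = Σ_{j=1}^{j_0} R_j(z) q_j(z) for scalar polynomials R_j. -/

import Mathlib

open Polynomial

/-- The height of an `n`-dimensional vector polynomial (0-indexed components):
`h(r) = max_j (n · deg R_j + j)`, with `deg 0 = ⊥` and `h(0) = ⊥`. -/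
noncomputable def height {n : ℕ} (r : Fin n → Polynomial ℂ) : WithBot ℕ :=
  Finset.univ.sup fun j : Fin n => WithBot.map (fun d => n * d + (j : ℕ)) (r j).degree

/-- The vector polynomial `e_{nk+i}(z) = z^k e_i`; in 0-indexed form `eVP n s = z^(s/n) e_(s%n)`,
corresponding to the 1-indexed `e_{s+1}`. -/
noncomputable def eVP (n : ℕ) (s : ℕ) : Fin n → Polynomial ℂ :=
  fun j => if (j : ℕ) = s % n then X ^ (s / n) else 0

/-- A positive `n×n` matrix measure `σ` on `ℝ` with all moments finite, encoded through the
(possibly degenerate) sesquilinear form `B f g = ∫_ℝ ⟨f(t), dσ(t) g(t)⟩` it induces on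
`n`-dimensional vector polynomials (antilinear in the first argument). The axiom `mul_symm`
expresses that multiplication by the real variable `t` is symmetric for the form. -/
structure MatMeasureForm (n : ℕ) where
  B : (Fin n → Polynomial ℂ) → (Fin n → Polynomial ℂ) → ℂ
  add_right : ∀ f g h, B f (g + h) = B f g + B f h
  smul_right : ∀ (c : ℂ) f g, B f (c • g) = c * B f g
  conj_symm : ∀ f g, B g f = (starRingEnd ℂ) (B f g)
  nonneg : ∀ f, 0 ≤ (B f f).re
  mul_symm : ∀ f g, B (fun j => X * f j) g = B f (fun j => X * g j)

/-
Null vectors are orthogonal to everything, by the Cauchy–Schwarz inequality for the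
semidefinite form `B`. Hence they form the radical of `B`, a submodule over `ℂ[X]` because
multiplication by the real variable is symmetric. Writing a null `r` as
`∑ c_k p_k + ∑_j R_j q_j`, the second sum is null, so pairing with `p_k` gives
`c_k = ⟨p_k, r⟩ = 0`.
-/

namespace MatMeasureForm

variable {n : ℕ} (M : MatMeasureForm n)

def rightLinear (f : Fin n → ℂ[X]) : (Fin n → ℂ[X]) →ₗ[ℂ] ℂ where
  toFun := M.B f
  map_add' := M.add_right f
  map_smul' c := M.smul_right c f

theorem add_left (f g h : Fin n → ℂ[X]) : M.B (f + g) h = M.B f h + M.B g h := by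
  rw [M.conj_symm, M.add_right, map_add, ← M.conj_symm, ← M.conj_symm]

theorem smul_left (c : ℂ) (f g : Fin n → ℂ[X]) :
    M.B (c • f) g = starRingEnd ℂ c * M.B f g := by
  rw [M.conj_symm, M.smul_right, map_mul, ← M.conj_symm]

abbrev toPreInnerProductSpaceCore : PreInnerProductSpace.Core ℂ (Fin n → ℂ[X]) where
  inner := M.B
  conj_inner_symm f g := (M.conj_symm g f).symm
  re_inner_nonneg := M.nonneg
  add_left := M.add_left
  smul_left f g c := M.smul_left c f g

theorem B_eq_zero_of_B_self_eq_zero (f : Fin n → ℂ[X]) {g : Fin n → ℂ[X]}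
    (hg : M.B g g = 0) : M.B f g = 0 := by
  let _ := M.toPreInnerProductSpaceCore
  have hcs : ‖M.B f g‖ * ‖M.B g f‖ ≤ (M.B f f).re * (M.B g g).re :=
    InnerProductSpace.Core.inner_mul_inner_self_le f g
  rw [hg, Complex.zero_re, mul_zero, M.conj_symm f g, RCLike.norm_conj] at hcs
  exact norm_eq_zero.mp (mul_self_eq_zero.mp (hcs.antisymm (mul_self_nonneg _)))

theorem B_X_smul (f g : Fin n → ℂ[X]) :
    M.B f ((X : ℂ[X]) • g) = M.B ((X : ℂ[X]) • f) g :=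
  (M.mul_symm f g).symm

def nullSubmodule : Submodule ℂ[X] (Fin n → ℂ[X]) where
  carrier := {g | ∀ f, M.B f g = 0}
  add_mem' {g h} hg hh f := by rw [M.add_right, hg f, hh f, add_zero]
  zero_mem' f := by simpa using M.smul_right 0 f 0
  smul_mem' R g hg := by
    induction R using Polynomial.induction_on with
    | C a => intro f; rw [← algebraMap_eq, algebraMap_smul, M.smul_right, hg f, mul_zero]
    | add R S hR hS => intro f; rw [add_smul, M.add_right, hR f, hS f, add_zero]
    | monomial m a h =>
      intro f; rw [pow_succ, ← mul_assoc, mul_comm _ X, mul_smul, M.B_X_smul, h]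

theorem mem_nullSubmodule_iff {g : Fin n → ℂ[X]} : g ∈ M.nullSubmodule ↔ M.B g g = 0 :=
  ⟨fun hg => hg g, fun hg f => M.B_eq_zero_of_B_self_eq_zero f hg⟩

theorem B_sum_smul_of_orthonormal {ι : Type*} [DecidableEq ι] {p : ι → Fin n → ℂ[X]}
    (horth : ∀ k l, M.B (p k) (p l) = if k = l then 1 else 0) {K : Finset ι} {k : ι}
    (hk : k ∈ K) (c : ι → ℂ) : M.B (p k) (∑ l ∈ K, c l • p l) = c k := by
  change M.rightLinear (p k) _ = _
  simp only [map_sum, map_smul, rightLinear, LinearMap.coe_mk, AddHom.coe_mk, horth,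
    smul_eq_mul, mul_ite, mul_one, mul_zero, Finset.sum_ite_eq, if_pos hk]

end MatMeasureForm

/-- If `{p_k}` is orthonormal in `L_2(ℝ,σ)`, the `q_j` are null, and every vector polynomial is a
finite linear combination of the `p_k` and the `z^l q_j`, then every vector polynomial in the zero
equivalence class is `∑_j R_j(z) q_j(z)` for scalar polynomials `R_j`. -/
theorem null_class_generated_by_q (n j0 : ℕ) (M : MatMeasureForm n)
    (p : ℕ → (Fin n → Polynomial ℂ)) (q : Fin j0 → (Fin n → Polynomial ℂ))
    (horth : ∀ k l : ℕ, M.B (p k) (p l) = if k = l then 1 else 0)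
    (hqnull : ∀ j, M.B (q j) (q j) = 0)
    (hspan : ∀ r : Fin n → Polynomial ℂ, ∃ (K : Finset ℕ) (c : ℕ → ℂ)
      (R : Fin j0 → Polynomial ℂ),
      r = (∑ k ∈ K, c k • p k) + fun i => ∑ j, R j * q j i) :
    ∀ r : Fin n → Polynomial ℂ, M.B r r = 0 →
      ∃ R : Fin j0 → Polynomial ℂ, r = fun i => ∑ j, R j * q j i := by
  intro r hr
  obtain ⟨K, c, R, rfl⟩ := hspan r
  have hnull : (fun i => ∑ j, R j * q j i) ∈ M.nullSubmodule := by
    have hsum : (fun i => ∑ j, R j * q j i) = ∑ j, R j • q j := by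
      ext i : 1; simp
    rw [hsum]
    exact Submodule.sum_mem _ fun j _ =>
      Submodule.smul_mem _ _ (M.mem_nullSubmodule_iff.mpr (hqnull j))
  have hc : ∀ k ∈ K, c k = 0 := fun k hk => by
    simpa [M.add_right, M.B_sum_smul_of_orthonormal horth hk, hnull (p k)] using
      M.B_eq_zero_of_B_self_eq_zero (p k) hr
  refine ⟨R, ?_⟩
  rw [Finset.sum_eq_zero fun k hk => by rw [hc k hk, zero_smul], zero_add]
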